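/- arXiv:2407.01868 — 7 statements merged into one kernel-verified Lean document; each statement's English description precedes it below -/
import Mathlib

section
/- Let W be an (m+p)×(m+p) symmetric positive definite matrix, C a p×(m+p) full row rank matrix, and J = [I_m 0] the m×(m+p) selection matrix picking the first m coordinates. Then J W C' (C W C')⁻¹ C W J' is positive semi-definite; in particular every diagonal entry of J W J' - J M W J' is non-negative, where M = I - W C' (C W C')⁻¹ C. -/
open Matrix

namespace Matrix.PosSemidef

variable {l m n R : Type*} [Finite l] [Fintype m] [Fintype n] [DecidableEq m]
  [CommRing R] [PartialOrder R] [StarRing R]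

/-- If `C * W * Cᴴ` is singular, its inverse is the junk value `0`, which is positive semidefinite
  too (`PosSemidef.inv`). -/
lemma mul_conjTranspose_mul_inv_mul_mul {W : Matrix n n R} (hW : W.PosSemidef)
    (J : Matrix l n R) (C : Matrix m n R) :
    (J * W * Cᴴ * (C * W * Cᴴ)⁻¹ * C * W * Jᴴ).PosSemidef := by
  have hB : (J * W * Cᴴ)ᴴ = C * W * Jᴴ := by
    simp only [conjTranspose_mul, conjTranspose_conjTranspose, hW.isHermitian.eq, Matrix.mul_assoc]
  have h := (hW.mul_mul_conjTranspose_same C).inv.mul_mul_conjTranspose_same (J * W * Cᴴ)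
  rw [hB] at h
  simpa only [Matrix.mul_assoc] using h

end Matrix.PosSemidef

theorem flap_subvector_variance_reduction_psd_general (m p : ℕ)
    (W : Matrix (Fin m ⊕ Fin p) (Fin m ⊕ Fin p) ℝ) (hW : W.PosDef)
    (C : Matrix (Fin p) (Fin m ⊕ Fin p) ℝ) :
    let J : Matrix (Fin m) (Fin m ⊕ Fin p) ℝ := fromCols 1 0
    let M : Matrix (Fin m ⊕ Fin p) (Fin m ⊕ Fin p) ℝ :=
      1 - W * Cᵀ * (C * W * Cᵀ)⁻¹ * C
    (J * W * Cᵀ * (C * W * Cᵀ)⁻¹ * C * W * Jᵀ).PosSemidef ∧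
      ∀ i, 0 ≤ (J * W * Jᵀ - J * M * W * Jᵀ) i i := by
  intro J M
  have hpsd : (J * W * Cᵀ * (C * W * Cᵀ)⁻¹ * C * W * Jᵀ).PosSemidef := by
    simpa only [conjTranspose_eq_transpose_of_trivial] using
      hW.posSemidef.mul_conjTranspose_mul_inv_mul_mul J C
  have hdiff : J * W * Jᵀ - J * M * W * Jᵀ = J * W * Cᵀ * (C * W * Cᵀ)⁻¹ * C * W * Jᵀ := by
    simp only [M, Matrix.mul_sub, Matrix.sub_mul, Matrix.mul_one, sub_sub_cancel, Matrix.mul_assoc]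
  exact ⟨hpsd, fun i => hdiff ▸ hpsd.diag_nonneg⟩

theorem flap_subvector_variance_reduction_psd (m p : ℕ)
    (W : Matrix (Fin m ⊕ Fin p) (Fin m ⊕ Fin p) ℝ) (hW : W.PosDef)
    (C : Matrix (Fin p) (Fin m ⊕ Fin p) ℝ) (hC : C.rank = p) :
    let J : Matrix (Fin m) (Fin m ⊕ Fin p) ℝ := fromCols 1 0
    let M : Matrix (Fin m ⊕ Fin p) (Fin m ⊕ Fin p) ℝ :=
      1 - W * Cᵀ * (C * W * Cᵀ)⁻¹ * C
    (J * W * Cᵀ * (C * W * Cᵀ)⁻¹ * C * W * Jᵀ).PosSemidef ∧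
      ∀ i, 0 ≤ (J * W * Jᵀ - J * M * W * Jᵀ) i i :=
  flap_subvector_variance_reduction_psd_general m p W hW C
end

section
/- Let Φ ∈ ℝ^{p×m} with p ≤ m have orthonormal rows, C = [-Φ I_p], W = I_{m+p}, and J = [I_m 0]. Then tr(J C'(C C')⁻¹ C J') = p/2. In particular if p = m then J C'(C C')⁻¹ C J' = (1/2) I_m. -/
/-! With `C = [-Φ I]` and orthonormal rows of `Φ`, `C Cᵀ = Φ Φᵀ + I = 2 I`, while the `m × m` block
`J Cᵀ` is `-Φᵀ`. Hence `J Cᵀ (C Cᵀ)⁻¹ C Jᵀ = ½ Φᵀ Φ`, whose trace is `½ tr (Φ Φᵀ) = p / 2`;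
when `p = m`, `Φ` is orthogonal and `Φᵀ Φ = I`. -/

open Matrix

namespace Matrix

variable {m p R : Type*} [Fintype m] [Fintype p]

section CommRing

variable [CommRing R]

theorem fromCols_mul_transpose_self (A : Matrix p m R) (B : Matrix p p R) :
    fromCols A B * (fromCols A B)ᵀ = A * Aᵀ + B * Bᵀ := by
  rw [transpose_fromCols, fromCols_mul_fromRows]

variable [DecidableEq m]

theorem fromCols_one_zero_mul_transpose_fromCols (A : Matrix p m R) (B : Matrix p p R) :
    (fromCols 1 0 : Matrix m (m ⊕ p) R) * (fromCols A B)ᵀ = Aᵀ := by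
  rw [transpose_fromCols, fromCols_mul_fromRows, Matrix.one_mul, Matrix.zero_mul, add_zero]

theorem fromCols_mul_transpose_fromCols_one_zero (A : Matrix p m R) (B : Matrix p p R) :
    fromCols A B * (fromCols 1 0 : Matrix m (m ⊕ p) R)ᵀ = A := by
  rw [← transpose_transpose (fromCols A B * _), transpose_mul, transpose_transpose,
    fromCols_one_zero_mul_transpose_fromCols, transpose_transpose]

end CommRing

theorem fromCols_one_zero_projection_of_mul_transpose_eq_one [DecidableEq m] [DecidableEq p]
    {K : Type*} [Field K] [NeZero (2 : K)] (Φ : Matrix p m K) (hΦ : Φ * Φᵀ = 1) :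
    let C : Matrix p (m ⊕ p) K := fromCols (-Φ) 1
    let J : Matrix m (m ⊕ p) K := fromCols 1 0
    J * Cᵀ * (C * Cᵀ)⁻¹ * C * Jᵀ = (2 : K)⁻¹ • (Φᵀ * Φ) := by
  intro C J
  have hCCt : C * Cᵀ = (2 : K) • 1 := by
    rw [fromCols_mul_transpose_self, Matrix.neg_mul, transpose_neg, Matrix.mul_neg, neg_neg, hΦ,
      transpose_one, Matrix.one_mul, two_smul]
  have hCCt_inv : (C * Cᵀ)⁻¹ = (2 : K)⁻¹ • 1 :=
    inv_eq_left_inv <| by rw [hCCt, smul_mul_smul_comm, inv_mul_cancel₀ two_ne_zero, one_smul,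
      Matrix.one_mul]
  rw [hCCt_inv, Matrix.mul_assoc _ C, fromCols_mul_transpose_fromCols_one_zero,
    fromCols_one_zero_mul_transpose_fromCols, Matrix.mul_smul, Matrix.mul_one, Matrix.smul_mul,
    transpose_neg, Matrix.neg_mul, Matrix.mul_neg, neg_neg]

end Matrix

theorem flap_identityW_trace_reduction_general (m p : ℕ)
    (Φ : Matrix (Fin p) (Fin m) ℝ) (hΦ : Φ * Φᵀ = 1) :
    let C : Matrix (Fin p) (Fin m ⊕ Fin p) ℝ := fromCols (-Φ) 1
    let J : Matrix (Fin m) (Fin m ⊕ Fin p) ℝ := fromCols 1 0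
    (J * Cᵀ * (C * Cᵀ)⁻¹ * C * Jᵀ).trace = (p : ℝ) / 2 ∧
      (p = m → J * Cᵀ * (C * Cᵀ)⁻¹ * C * Jᵀ = (1 / 2 : ℝ) • 1) := by
  intro C J
  rw [fromCols_one_zero_projection_of_mul_transpose_eq_one Φ hΦ]
  refine ⟨?_, fun hpm => ?_⟩
  · rw [trace_smul, trace_mul_comm, hΦ, trace_one, Fintype.card_fin, smul_eq_mul,
      inv_mul_eq_div]
  · subst hpm
    rw [mul_eq_one_comm.mp hΦ, one_div]

theorem flap_identityW_trace_reduction (m p : ℕ) (hp : p ≤ m)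
    (Φ : Matrix (Fin p) (Fin m) ℝ) (hΦ : Φ * Φᵀ = 1) :
    let C : Matrix (Fin p) (Fin m ⊕ Fin p) ℝ := fromCols (-Φ) 1
    let J : Matrix (Fin m) (Fin m ⊕ Fin p) ℝ := fromCols 1 0
    (J * Cᵀ * (C * Cᵀ)⁻¹ * C * Jᵀ).trace = (p : ℝ) / 2 ∧
      (p = m → J * Cᵀ * (C * Cᵀ)⁻¹ * C * Jᵀ = (1 / 2 : ℝ) • 1) :=
  flap_identityW_trace_reduction_general m p Φ hΦ
end

section
/- Let W* be a symmetric positive definite (m+p+q)×(m+p+q) matrix with leading principal (m+p)×(m+p) block W. Let C be p×(m+p) of full row rank and C̄ = [C 0_{p×q}]. Define M⁺ = I_{m+p+q} - W* C̄' (C̄ W* C̄')⁻¹ C̄ and M = I_{m+p} - W C' (C W C')⁻¹ C. Then the leading (m+p)×(m+p) principal submatrix of M⁺ W* equals M W. (Adding components without imposing their constraints leaves the projected error covariance of the original block unchanged.) -/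
open Matrix

/-!
Write `E = [1 0]`, so that `C̄ = C E` and `X.toBlocks₁₁ = E X Eᵀ` for every block matrix `X`.
Then `C̄ W* C̄ᵀ = C W Cᵀ`, and the leading block of `M⁺ W* = W* - W* C̄ᵀ K C̄ W*` is
`E W* Eᵀ - E W* Eᵀ Cᵀ K C E W* Eᵀ = W - W Cᵀ K C W`: an identity that holds for every `K`,
in particular for `K = (C W Cᵀ)⁻¹`.
-/

namespace Matrix

variable {R l n o : Type*} [CommRing R] [Fintype n] [DecidableEq n]

theorem fromCols_zero_eq_mul_fromCols_one_zero (C : Matrix l n R) :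
    fromCols C (0 : Matrix l o R) = C * fromCols (1 : Matrix n n R) (0 : Matrix n o R) := by
  rw [mul_fromCols, Matrix.mul_one, Matrix.mul_zero]

theorem toBlocks₁₁_eq_fromCols_one_zero_mul_mul_transpose [Fintype o]
    (X : Matrix (n ⊕ o) (n ⊕ o) R) :
    X.toBlocks₁₁ = fromCols (1 : Matrix n n R) (0 : Matrix n o R) * X *
      (fromCols (1 : Matrix n n R) (0 : Matrix n o R))ᵀ := by
  conv_rhs => rw [← fromBlocks_toBlocks X]
  simp [transpose_fromCols, fromCols_mul_fromBlocks, fromCols_mul_fromRows]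

theorem fromCols_zero_mul_mul_transpose [Fintype o] (C : Matrix l n R)
    (X : Matrix (n ⊕ o) (n ⊕ o) R) :
    fromCols C (0 : Matrix l o R) * X * (fromCols C (0 : Matrix l o R))ᵀ =
      C * X.toBlocks₁₁ * Cᵀ := by
  simp only [fromCols_zero_eq_mul_fromCols_one_zero C,
    toBlocks₁₁_eq_fromCols_one_zero_mul_mul_transpose, transpose_mul, Matrix.mul_assoc]

theorem toBlocks₁₁_one_sub_mul_fromCols_zero_mul [Fintype o] [DecidableEq o] [Fintype l]
    (X : Matrix (n ⊕ o) (n ⊕ o) R) (C : Matrix l n R) (K : Matrix l l R) :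
    ((1 - X * (fromCols C (0 : Matrix l o R))ᵀ * K * fromCols C (0 : Matrix l o R)) *
      X).toBlocks₁₁ =
      (1 - X.toBlocks₁₁ * Cᵀ * K * C) * X.toBlocks₁₁ := by
  simp only [fromCols_zero_eq_mul_fromCols_one_zero C,
    toBlocks₁₁_eq_fromCols_one_zero_mul_mul_transpose, transpose_mul,
    Matrix.sub_mul, Matrix.mul_sub, Matrix.one_mul, Matrix.mul_assoc]

end Matrix

theorem flap_add_components_without_constraints_general (m p q : ℕ)
    (Wstar : Matrix (Fin (m + p) ⊕ Fin q) (Fin (m + p) ⊕ Fin q) ℝ)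
    (C : Matrix (Fin p) (Fin (m + p)) ℝ) :
    let W : Matrix (Fin (m + p)) (Fin (m + p)) ℝ := Wstar.toBlocks₁₁
    let Cbar : Matrix (Fin p) (Fin (m + p) ⊕ Fin q) ℝ := fromCols C 0
    let Mplus : Matrix (Fin (m + p) ⊕ Fin q) (Fin (m + p) ⊕ Fin q) ℝ :=
      1 - Wstar * Cbarᵀ * (Cbar * Wstar * Cbarᵀ)⁻¹ * Cbar
    let M : Matrix (Fin (m + p)) (Fin (m + p)) ℝ :=
      1 - W * Cᵀ * (C * W * Cᵀ)⁻¹ * C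
    (Mplus * Wstar).toBlocks₁₁ = M * W := by
  intro W Cbar Mplus M
  rw [← toBlocks₁₁_one_sub_mul_fromCols_zero_mul, ← fromCols_zero_mul_mul_transpose]

theorem flap_add_components_without_constraints (m p q : ℕ)
    (Wstar : Matrix (Fin (m + p) ⊕ Fin q) (Fin (m + p) ⊕ Fin q) ℝ)
    (hWstar : Wstar.PosDef)
    (C : Matrix (Fin p) (Fin (m + p)) ℝ) (hC : C.rank = p) :
    let W : Matrix (Fin (m + p)) (Fin (m + p)) ℝ := Wstar.toBlocks₁₁
    let Cbar : Matrix (Fin p) (Fin (m + p) ⊕ Fin q) ℝ := fromCols C 0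
    let Mplus : Matrix (Fin (m + p) ⊕ Fin q) (Fin (m + p) ⊕ Fin q) ℝ :=
      1 - Wstar * Cbarᵀ * (Cbar * Wstar * Cbarᵀ)⁻¹ * Cbar
    let M : Matrix (Fin (m + p)) (Fin (m + p)) ℝ :=
      1 - W * Cᵀ * (C * W * Cᵀ)⁻¹ * C
    (Mplus * Wstar).toBlocks₁₁ = M * W :=
  flap_add_components_without_constraints_general m p q Wstar C
end

section
/- Let W* be symmetric positive definite of size n = m+p+q, let C̄ ∈ ℝ^{p×n} and C_low ∈ ℝ^{q×n} be such that the stacked matrix C* = [C̄; C_low] ∈ ℝ^{(p+q)×n} has full row rank. Define M⁺ = I - W* C̄'(C̄ W* C̄')⁻¹ C̄. Then C*'(C* W* C*')⁻¹ C* = C̄'(C̄ W* C̄')⁻¹ C̄ + M⁺' C_low' (C_low M⁺ W* C_low')⁻¹ C_low M⁺. -/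
/-!
The Gram matrix `C* W* C*ᵀ` of the stacked constraints is the 2×2 block matrix with blocks
`Cᵢ W* Cⱼᵀ`, and `C_low M⁺ W* C_lowᵀ` is exactly the Schur complement of its upper-left block
`C̄ W* C̄ᵀ`. Inverting the block matrix by the Schur complement formula and multiplying out gives
the identity. Positive definiteness of `W*` and full row rank of `C*` (hence of `C̄`) make both
Gram matrices positive definite, so all the inverses exist.
-/

open Matrix

namespace Matrix

variable {m l n : Type*} [Fintype n]

theorem fromRows_mul_mul_transpose_fromRows {R : Type*} [CommRing R] (W : Matrix n n R)
    (A : Matrix m n R) (B : Matrix l n R) :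
    fromRows A B * W * (fromRows A B)ᵀ =
      fromBlocks (A * W * Aᵀ) (A * W * Bᵀ) (B * W * Aᵀ) (B * W * Bᵀ) := by
  rw [transpose_fromRows, fromRows_mul, fromRows_mul_fromCols]

variable [Fintype m] [Fintype l]

theorem linearIndependent_row_of_rank_eq_card {K : Type*} [Field K] {C : Matrix m n K}
    (h : C.rank = Fintype.card m) : LinearIndependent K C.row := by
  rw [linearIndependent_iff_card_eq_finrank_span, ← h, rank_eq_finrank_span_row]
  rfl

theorem PosDef.mul_mul_transpose_of_linearIndependent_row {W : Matrix n n ℝ} (hW : W.PosDef)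
    {C : Matrix m n ℝ} (hC : LinearIndependent ℝ C.row) : (C * W * Cᵀ).PosDef := by
  simpa only [conjTranspose_eq_transpose_of_trivial] using
    hW.mul_mul_conjTranspose_same (vecMul_injective_iff.mpr hC)

variable {R : Type*} [CommRing R] [DecidableEq m] [DecidableEq l] [DecidableEq n]

theorem transpose_fromRows_mul_inv_mul_fromRows {W : Matrix n n R} (hW : W.IsSymm)
    (A : Matrix m n R) (B : Matrix l n R) (hA : IsUnit (A * W * Aᵀ))
    (hK : IsUnit (fromRows A B * W * (fromRows A B)ᵀ)) :
    let M := 1 - W * Aᵀ * (A * W * Aᵀ)⁻¹ * A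
    (fromRows A B)ᵀ * (fromRows A B * W * (fromRows A B)ᵀ)⁻¹ * fromRows A B =
      Aᵀ * (A * W * Aᵀ)⁻¹ * A + Mᵀ * Bᵀ * (B * M * W * Bᵀ)⁻¹ * B * M := by
  intro M
  rw [fromRows_mul_mul_transpose_fromRows] at hK ⊢
  let := hA.invertible
  let := hK.invertible
  let := invertibleOfFromBlocks₁₁Invertible (A * W * Aᵀ) (A * W * Bᵀ) (B * W * Aᵀ) (B * W * Bᵀ)
  have hschur : B * M * W * Bᵀ = B * W * Bᵀ - B * W * Aᵀ * ⅟(A * W * Aᵀ) * (A * W * Bᵀ) := by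
    simp only [M, invOf_eq_nonsing_inv, Matrix.mul_sub, Matrix.sub_mul, Matrix.mul_one,
      Matrix.mul_assoc]
  rw [← invOf_eq_nonsing_inv, invOf_fromBlocks₁₁_eq, transpose_fromRows, fromCols_mul_fromBlocks,
    fromCols_mul_fromRows, hschur]
  simp only [M, invOf_eq_nonsing_inv, transpose_sub, transpose_mul, transpose_one,
    transpose_transpose, transpose_nonsing_inv, hW.eq, Matrix.mul_add, Matrix.add_mul,
    Matrix.mul_sub, Matrix.sub_mul, Matrix.neg_mul, Matrix.mul_neg, Matrix.one_mul,
    Matrix.mul_one, Matrix.mul_assoc]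
  abel

end Matrix

theorem flap_block_projection_identity (n p q : ℕ)
    (Wstar : Matrix (Fin n) (Fin n) ℝ) (hWstar : Wstar.PosDef)
    (Cbar : Matrix (Fin p) (Fin n) ℝ) (Clow : Matrix (Fin q) (Fin n) ℝ)
    (hrank : (fromRows Cbar Clow).rank = p + q) :
    let Cstar : Matrix (Fin p ⊕ Fin q) (Fin n) ℝ := fromRows Cbar Clow
    let Mplus : Matrix (Fin n) (Fin n) ℝ :=
      1 - Wstar * Cbarᵀ * (Cbar * Wstar * Cbarᵀ)⁻¹ * Cbar
    Cstarᵀ * (Cstar * Wstar * Cstarᵀ)⁻¹ * Cstar =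
      Cbarᵀ * (Cbar * Wstar * Cbarᵀ)⁻¹ * Cbar +
        Mplusᵀ * Clowᵀ * (Clow * Mplus * Wstar * Clowᵀ)⁻¹ * Clow * Mplus := by
  have hrows : LinearIndependent ℝ (fromRows Cbar Clow).row :=
    linearIndependent_row_of_rank_eq_card (by simpa using hrank)
  have hbar : LinearIndependent ℝ Cbar.row := hrows.comp Sum.inl Sum.inl_injective
  exact transpose_fromRows_mul_inv_mul_fromRows hWstar.isHermitian Cbar Clow
    (hWstar.mul_mul_transpose_of_linearIndependent_row hbar).isUnit
    (hWstar.mul_mul_transpose_of_linearIndependent_row hrows).isUnit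
end

section
/- Let W be symmetric positive definite of size m+1, ψ = [-φ, 1] with φ ∈ ℝ^{1×m}, write W = [[W_y, w'],[w, w_c]] with W_y ∈ ℝ^{m×m}, w ∈ ℝ^{1×m}. Then the total variance reduction tr(J W ψ'(ψ W ψ')⁻¹ ψ W J') is strictly positive if and only if φ W_y ≠ w. -/
/-!
The vector `D := ψ W Jᵀ = w - φ W_y` satisfies `J W ψᵀ = Dᵀ` by symmetry of `W`, so the
variance reduction is `tr (Dᵀ (ψ W ψᵀ)⁻¹ D)`. Since the last entry of `ψ` is `1`, `ψ W ψᵀ` is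
positive definite, hence so is its inverse, and the trace of `Dᵀ N D` with `N` positive definite
vanishes exactly when `D = 0`.
-/

open Matrix

open scoped ComplexOrder

namespace Matrix

lemma PosDef.trace_conjTranspose_mul_mul_same_pos_iff {m n 𝕜 : Type*} [Fintype m] [Fintype n]
    [RCLike 𝕜] {N : Matrix n n 𝕜} (hN : N.PosDef) (D : Matrix n m 𝕜) :
    0 < (Dᴴ * N * D).trace ↔ D ≠ 0 := by
  have hpsd : (Dᴴ * N * D).PosSemidef := hN.posSemidef.conjTranspose_mul_mul_same D
  rw [hpsd.trace_nonneg.lt_iff_ne', ne_eq, hpsd.trace_eq_zero_iff, not_iff_not]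
  refine ⟨fun h => ?_, fun h => by simp [h]⟩
  refine Matrix.ext_iff_mulVec.mpr fun x => ?_
  by_contra hx
  rw [zero_mulVec] at hx
  have hquad : star (D *ᵥ x) ⬝ᵥ (N *ᵥ (D *ᵥ x)) = star x ⬝ᵥ ((Dᴴ * N * D) *ᵥ x) := by
    simp only [star_mulVec, dotProduct_mulVec, vecMul_vecMul, Matrix.mul_assoc]
  exact (hN.dotProduct_mulVec_pos hx).ne' (by rw [hquad, h, zero_mulVec, dotProduct_zero])

lemma injective_vecMul_fromCols_one {n k R : Type*} [Semiring R] [Fintype k] [DecidableEq k]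
    (A : Matrix k n R) : Function.Injective (fromCols A (1 : Matrix k k R)).vecMul := by
  intro v w hvw
  simpa using congrArg (fun f i => f (Sum.inr i)) hvw

lemma fromCols_mul_mul_transpose_fromCols_one_zero {l m₁ m₂ n₁ n₂ R : Type*} [Semiring R]
    [Fintype m₁] [Fintype m₂] [Fintype n₁] [Fintype n₂] [DecidableEq n₁]
    (A : Matrix l m₁ R) (B : Matrix l m₂ R) (W : Matrix (m₁ ⊕ m₂) (n₁ ⊕ n₂) R) :
    fromCols A B * W * (fromCols 1 0 : Matrix n₁ (n₁ ⊕ n₂) R)ᵀ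
      = A * W.toBlocks₁₁ + B * W.toBlocks₂₁ := by
  rw [← fromBlocks_toBlocks W, fromCols_mul_fromBlocks, transpose_fromCols, transpose_one,
    transpose_zero, fromCols_mul_fromRows]
  simp

end Matrix

theorem flap_positive_reduction_condition (m : ℕ)
    (W : Matrix (Fin m ⊕ Fin 1) (Fin m ⊕ Fin 1) ℝ) (hW : W.PosDef)
    (φ : Matrix (Fin 1) (Fin m) ℝ) :
    let ψ : Matrix (Fin 1) (Fin m ⊕ Fin 1) ℝ := fromCols (-φ) 1
    let J : Matrix (Fin m) (Fin m ⊕ Fin 1) ℝ := fromCols 1 0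
    (0 < (J * W * ψᵀ * (ψ * W * ψᵀ)⁻¹ * ψ * W * Jᵀ).trace ↔
      φ * W.toBlocks₁₁ ≠ W.toBlocks₂₁) := by
  intro ψ J
  have hψWψ : (ψ * W * ψᵀ).PosDef := by
    simpa using hW.mul_mul_conjTranspose_same (injective_vecMul_fromCols_one (-φ))
  have hD : ψ * W * Jᵀ = W.toBlocks₂₁ - φ * W.toBlocks₁₁ := by
    rw [fromCols_mul_mul_transpose_fromCols_one_zero]
    simp [sub_eq_neg_add]
  have hJWψ : J * W * ψᵀ = (ψ * W * Jᵀ)ᴴ := by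
    have hWsymm : Wᵀ = W := hW.isHermitian
    rw [conjTranspose_eq_transpose_of_trivial, transpose_mul, transpose_mul, transpose_transpose,
      hWsymm, Matrix.mul_assoc]
  have hsandwich : J * W * ψᵀ * (ψ * W * ψᵀ)⁻¹ * ψ * W * Jᵀ
      = (ψ * W * Jᵀ)ᴴ * (ψ * W * ψᵀ)⁻¹ * (ψ * W * Jᵀ) := by
    rw [hJWψ]
    simp only [Matrix.mul_assoc]
  rw [hsandwich, hψWψ.inv.trace_conjTranspose_mul_mul_same_pos_iff, hD, sub_ne_zero, ne_comm]
end

section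
/- Let W be symmetric positive definite of size m+p and S ∈ ℝ^{(m+p)×m} of full column rank. Among all G ∈ ℝ^{m×(m+p)} with G S = I_m, the matrix G* = (S' W⁻¹ S)⁻¹ S' W⁻¹ minimizes tr(G W G'). That is, tr(G W G') ≥ tr(G* W G*') for all G with G S = I_m. -/
/-!
Writing `G = G* + D`, the constraint `G S = I` gives `D S = 0`. Since `G* W = (S' W⁻¹ S)⁻¹ S'`,
the cross term `G* W D'` equals `(S' W⁻¹ S)⁻¹ (D S)' = 0`, so
`tr (G W G') = tr (G* W G*') + tr (D W D')`, and the last trace is nonnegative because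
`D W D'` is positive semidefinite.
-/

open Matrix

namespace Matrix

variable {n k : Type*} [Fintype k]

theorem mulVec_injective_of_rank_eq_card {K : Type*} [Field K] {S : Matrix n k K}
    (hS : S.rank = Fintype.card k) : Function.Injective S.mulVec := by
  rw [mulVec_injective_iff, linearIndependent_iff_card_eq_finrank_span, ← hS,
    rank_eq_finrank_span_cols, Set.finrank]

variable [Fintype n]

theorem trace_mul_mul_transpose_le_of_mul_mul_transpose_sub_eq_zero {W : Matrix n n ℝ}
    (hW : W.PosSemidef) {G₀ G : Matrix k n ℝ} (h : G₀ * W * (G - G₀)ᵀ = 0) :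
    (G₀ * W * G₀ᵀ).trace ≤ (G * W * Gᵀ).trace := by
  set D := G - G₀
  have hWsymm : Wᵀ = W := by simpa [conjTranspose_eq_transpose_of_trivial] using hW.isHermitian.eq
  have h' : D * W * G₀ᵀ = 0 := by
    simpa [Matrix.mul_assoc, hWsymm] using congrArg transpose h
  have hD : 0 ≤ (D * W * Dᵀ).trace := by
    simpa [conjTranspose_eq_transpose_of_trivial] using
      (hW.mul_mul_conjTranspose_same D).trace_nonneg
  have hG : G = G₀ + D := by simp [D]
  calc (G₀ * W * G₀ᵀ).trace ≤ (G₀ * W * G₀ᵀ).trace + (D * W * Dᵀ).trace := by linarith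
    _ = (G * W * Gᵀ).trace := by
      simp only [hG, transpose_add, Matrix.add_mul, Matrix.mul_add, h, h', trace_add, add_zero,
        zero_add]

variable [DecidableEq n]

theorem PosDef.transpose_mul_inv_mul {W : Matrix n n ℝ} (hW : W.PosDef) {S : Matrix n k ℝ}
    (hS : Function.Injective S.mulVec) : (Sᵀ * W⁻¹ * S).PosDef := by
  simpa [conjTranspose_eq_transpose_of_trivial] using hW.inv.conjTranspose_mul_mul_same hS

variable [DecidableEq k]

noncomputable def minTProjection (S : Matrix n k ℝ) (W : Matrix n n ℝ) : Matrix k n ℝ :=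
  (Sᵀ * W⁻¹ * S)⁻¹ * Sᵀ * W⁻¹

theorem minTProjection_mul_self {S : Matrix n k ℝ} {W : Matrix n n ℝ}
    (h : IsUnit (Sᵀ * W⁻¹ * S).det) : minTProjection S W * S = 1 := by
  rw [minTProjection, Matrix.mul_assoc, Matrix.mul_assoc, ← Matrix.mul_assoc Sᵀ,
    nonsing_inv_mul _ h]

theorem minTProjection_mul_mul_transpose_eq_zero {S : Matrix n k ℝ} {W : Matrix n n ℝ}
    (hW : IsUnit W.det) {D : Matrix k n ℝ} (hD : D * S = 0) :
    minTProjection S W * W * Dᵀ = 0 := by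
  rw [minTProjection, Matrix.mul_assoc _ W⁻¹, nonsing_inv_mul _ hW, Matrix.mul_one,
    Matrix.mul_assoc, ← transpose_mul, hD, transpose_zero, Matrix.mul_zero]

end Matrix

theorem flap_minT_trace_optimality (m p : ℕ)
    (W : Matrix (Fin (m + p)) (Fin (m + p)) ℝ) (hW : W.PosDef)
    (S : Matrix (Fin (m + p)) (Fin m) ℝ) (hS : S.rank = m) :
    let Gstar : Matrix (Fin m) (Fin (m + p)) ℝ :=
      (Sᵀ * W⁻¹ * S)⁻¹ * Sᵀ * W⁻¹
    ∀ G : Matrix (Fin m) (Fin (m + p)) ℝ, G * S = 1 →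
      (Gstar * W * Gstarᵀ).trace ≤ (G * W * Gᵀ).trace := by
  intro Gstar G hG
  have hSinj : Function.Injective S.mulVec :=
    mulVec_injective_of_rank_eq_card (by rw [hS, Fintype.card_fin])
  have hGstar : Gstar * S = 1 :=
    minTProjection_mul_self (hW.transpose_mul_inv_mul hSinj).det_pos.ne'.isUnit
  refine trace_mul_mul_transpose_le_of_mul_mul_transpose_sub_eq_zero hW.posSemidef ?_
  exact minTProjection_mul_mul_transpose_eq_zero hW.det_pos.ne'.isUnit
    (by rw [Matrix.sub_mul, hG, hGstar, sub_self])
end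

section
/- Let W be symmetric positive definite, C = [-Φ I_p], S = [I_m; Φ], M = I - W C'(C W C')⁻¹ C, and G = (S' W⁻¹ S)⁻¹ S' W⁻¹. Then M = S G, i.e., the orthogonal (in the W⁻¹ metric) projection onto the constraint subspace and the MinT-type reconciliation mapping coincide. -/
/-!
Both `M` and `S G` fix the columns of `S` (because `C S = 0`) and annihilate the columns of
`W Cᵀ`. The square matrix `X = [S | W Cᵀ]` is invertible: its `W⁻¹`-Gram matrix `Xᵀ W⁻¹ X` is
block diagonal, again by `C S = 0`, with the positive definite blocks `Sᵀ W⁻¹ S` and `C W Cᵀ`.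
Hence `M X = S G X` forces `M = S G`.
-/

open Matrix

namespace Matrix

variable {R : Type*} [CommRing R] {n m p : Type*} [Fintype n] [DecidableEq n]

/-- The `W⁻¹`-orthogonal projection onto `ker C` (the matrix `M`). -/
noncomputable def projKer [Fintype p] [DecidableEq p] (W : Matrix n n R) (C : Matrix p n R) :
    Matrix n n R :=
  1 - W * Cᵀ * (C * W * Cᵀ)⁻¹ * C

/-- The `W⁻¹`-orthogonal projection onto the column space of `S` (the matrix `S G`). -/
noncomputable def projRange [Fintype m] [DecidableEq m] (W : Matrix n n R) (S : Matrix n m R) :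
    Matrix n n R :=
  S * ((Sᵀ * W⁻¹ * S)⁻¹ * Sᵀ * W⁻¹)

theorem projKer_mul_of_mul_eq_zero [Fintype p] [DecidableEq p] (W : Matrix n n R)
    {C : Matrix p n R} {S : Matrix n m R} (hCS : C * S = 0) : projKer W C * S = S := by
  rw [projKer, Matrix.sub_mul, Matrix.one_mul, Matrix.mul_assoc, hCS, Matrix.mul_zero, sub_zero]

theorem projKer_mul_mul_transpose [Fintype p] [DecidableEq p] {W : Matrix n n R}
    {C : Matrix p n R} (h : IsUnit (C * W * Cᵀ).det) : projKer W C * (W * Cᵀ) = 0 := by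
  rw [projKer, Matrix.sub_mul, Matrix.one_mul, Matrix.mul_assoc _ C, ← Matrix.mul_assoc C,
    nonsing_inv_mul_cancel_right _ _ h, sub_self]

theorem projRange_mul_self [Fintype m] [DecidableEq m] {W : Matrix n n R} {S : Matrix n m R}
    (h : IsUnit (Sᵀ * W⁻¹ * S).det) : projRange W S * S = S := by
  rw [projRange, Matrix.mul_assoc, Matrix.mul_assoc _ W⁻¹, Matrix.mul_assoc _ Sᵀ,
    ← Matrix.mul_assoc Sᵀ, nonsing_inv_mul _ h, Matrix.mul_one]

theorem projRange_mul_mul_transpose [Fintype m] [DecidableEq m] {W : Matrix n n R}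
    {S : Matrix n m R} {C : Matrix p n R} (hW : IsUnit W.det) (hCS : C * S = 0) :
    projRange W S * (W * Cᵀ) = 0 := by
  have hSC : Sᵀ * Cᵀ = 0 := by rw [← transpose_mul, hCS, transpose_zero]
  rw [projRange, Matrix.mul_assoc, Matrix.mul_assoc, nonsing_inv_mul_cancel_left _ _ hW,
    Matrix.mul_assoc, hSC, Matrix.mul_zero, Matrix.mul_zero]

theorem transpose_fromCols_mul_inv_mul_fromCols [Fintype m] {W : Matrix n n R} {S : Matrix n m R}
    {C : Matrix p n R} (hWs : Wᵀ = W) (hW : IsUnit W.det) (hCS : C * S = 0) :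
    (fromCols S (W * Cᵀ))ᵀ * W⁻¹ * fromCols S (W * Cᵀ) =
      fromBlocks (Sᵀ * W⁻¹ * S) 0 0 (C * W * Cᵀ) := by
  have hSC : Sᵀ * Cᵀ = 0 := by rw [← transpose_mul, hCS, transpose_zero]
  rw [transpose_fromCols, transpose_mul, transpose_transpose, hWs, fromRows_mul,
    fromRows_mul_fromCols, Matrix.mul_assoc _ W⁻¹ (W * Cᵀ), nonsing_inv_mul_cancel_left _ _ hW,
    mul_nonsing_inv_cancel_right _ _ hW, hSC, hCS, ← Matrix.mul_assoc]

theorem isUnit_fromCols [Fintype m] [DecidableEq m] [Fintype p] [DecidableEq p]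
    {W : Matrix (m ⊕ p) (m ⊕ p) R} {S : Matrix (m ⊕ p) m R} {C : Matrix p (m ⊕ p) R}
    (hWs : Wᵀ = W) (hW : IsUnit W.det) (hA : IsUnit (Sᵀ * W⁻¹ * S).det)
    (hB : IsUnit (C * W * Cᵀ).det) (hCS : C * S = 0) : IsUnit (fromCols S (W * Cᵀ)) := by
  have hGram : IsUnit ((fromCols S (W * Cᵀ))ᵀ * W⁻¹ * fromCols S (W * Cᵀ)) := by
    rw [transpose_fromCols_mul_inv_mul_fromCols hWs hW hCS, isUnit_iff_isUnit_det,
      det_fromBlocks_zero₂₁]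
    exact hA.mul hB
  exact isUnit_of_mul_isUnit_right hGram

theorem projKer_eq_projRange [Fintype m] [DecidableEq m] [Fintype p] [DecidableEq p]
    {W : Matrix (m ⊕ p) (m ⊕ p) R} {S : Matrix (m ⊕ p) m R} {C : Matrix p (m ⊕ p) R}
    (hWs : Wᵀ = W) (hW : IsUnit W.det) (hA : IsUnit (Sᵀ * W⁻¹ * S).det)
    (hB : IsUnit (C * W * Cᵀ).det) (hCS : C * S = 0) : projKer W C = projRange W S := by
  refine (isUnit_fromCols hWs hW hA hB hCS).mul_left_injective ?_
  simp only [mul_fromCols, projKer_mul_of_mul_eq_zero W hCS, projKer_mul_mul_transpose hB,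
    projRange_mul_self hA, projRange_mul_mul_transpose hW hCS]

theorem projKer_eq_projRange_of_posDef [Fintype m] [DecidableEq m] [Fintype p] [DecidableEq p]
    {W : Matrix (m ⊕ p) (m ⊕ p) ℝ} {S : Matrix (m ⊕ p) m ℝ} {C : Matrix p (m ⊕ p) ℝ}
    (hW : W.PosDef) (hS : Function.Injective S.mulVec) (hC : Function.Injective C.vecMul)
    (hCS : C * S = 0) : projKer W C = projRange W S := by
  have hWs : Wᵀ = W := by
    simpa only [conjTranspose_eq_transpose_of_trivial] using hW.isHermitian.eq
  have hA : (Sᵀ * W⁻¹ * S).PosDef := by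
    simpa only [conjTranspose_eq_transpose_of_trivial] using hW.inv.conjTranspose_mul_mul_same hS
  have hB : (C * W * Cᵀ).PosDef := by
    simpa only [conjTranspose_eq_transpose_of_trivial] using hW.mul_mul_conjTranspose_same hC
  exact projKer_eq_projRange hWs hW.det_pos.ne'.isUnit hA.det_pos.ne'.isUnit
    hB.det_pos.ne'.isUnit hCS

theorem fromCols_neg_one_mul_fromRows_one [Fintype m] [DecidableEq m] [Fintype p]
    [DecidableEq p] (Φ : Matrix p m R) :
    fromCols (-Φ) (1 : Matrix p p R) * fromRows (1 : Matrix m m R) Φ = 0 := by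
  rw [fromCols_mul_fromRows, Matrix.mul_one, Matrix.one_mul, neg_add_cancel]

theorem mulVec_injective_fromRows_one [Fintype m] [DecidableEq m] (Φ : Matrix p m R) :
    Function.Injective (fromRows (1 : Matrix m m R) Φ).mulVec := by
  intro x y h
  simpa [fromRows_mulVec] using congrArg (fun v => fun i => v (Sum.inl i)) h

theorem vecMul_injective_fromCols_one [Fintype p] [DecidableEq p] (Φ : Matrix p m R) :
    Function.Injective (fromCols (-Φ) (1 : Matrix p p R)).vecMul := by
  intro x y h
  simpa [vecMul_fromCols] using congrArg (fun v => fun i => v (Sum.inr i)) h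

end Matrix

theorem flap_M_eq_SG (m p : ℕ)
    (Φ : Matrix (Fin p) (Fin m) ℝ)
    (W : Matrix (Fin m ⊕ Fin p) (Fin m ⊕ Fin p) ℝ) (hW : W.PosDef) :
    let C : Matrix (Fin p) (Fin m ⊕ Fin p) ℝ := fromCols (-Φ) 1
    let S : Matrix (Fin m ⊕ Fin p) (Fin m) ℝ := fromRows 1 Φ
    let M : Matrix (Fin m ⊕ Fin p) (Fin m ⊕ Fin p) ℝ :=
      1 - W * Cᵀ * (C * W * Cᵀ)⁻¹ * C
    let G : Matrix (Fin m) (Fin m ⊕ Fin p) ℝ := (Sᵀ * W⁻¹ * S)⁻¹ * Sᵀ * W⁻¹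
    M = S * G :=
  projKer_eq_projRange_of_posDef hW (mulVec_injective_fromRows_one Φ)
    (vecMul_injective_fromCols_one Φ) (fromCols_neg_one_mul_fromRows_one Φ)
end
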